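/- For every m ≥ 1 and all real parameters α and β, the Markov chain M on 𝔐²_m is irreducible and aperiodic, and it is reversible with respect to the Gibbs distribution π(x) = e^{−E(x)}/Z, where Z = Σ_{y∈𝔐²_m} e^{−E(y)}; in particular, π is the unique stationary distribution of M. -/

import Mathlib

open Finset

/-- The four symbols of a 2-Motzkin path: up-step `U`, two colors of
horizontal steps `H` and `I`, and down-step `D`. -/
inductive MSym : Type
  | U | H | I | D
  deriving DecidableEq

instance : Fintype MSym where
  elems := {MSym.U, MSym.H, MSym.I, MSym.D}
  complete := fun x => by cases x <;> simp

/-- `symCount x a` is `|x|_a`, the number of occurrences of the symbol `a` in `x`. -/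
def symCount {m : ℕ} (x : Fin m → MSym) (a : MSym) : ℕ :=
  (Finset.univ.filter (fun i => x i = a)).card

/-- the number of occurrences of `a` among the first `j+1` symbols of `x`. -/
def symCountPrefix {m : ℕ} (x : Fin m → MSym) (a : MSym) (j : Fin m) : ℕ :=
  (Finset.univ.filter (fun i => i ≤ j ∧ x i = a)).card

/-- `x` is a 2-Motzkin path: no prefix has more `D`s than `U`s, and the
total number of `U`s equals the total number of `D`s. -/
def IsMotzkin2 {m : ℕ} (x : Fin m → MSym) : Prop :=
  (∀ j : Fin m, symCountPrefix x MSym.D j ≤ symCountPrefix x MSym.U j) ∧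
    symCount x MSym.U = symCount x MSym.D

instance {m : ℕ} : DecidablePred (IsMotzkin2 (m := m)) := fun _ => by
  unfold IsMotzkin2; infer_instance

/-- `𝔐²_m` : the set of 2-Motzkin paths of length `m`. -/
abbrev Motzkin2 (m : ℕ) : Type := {x : Fin m → MSym // IsMotzkin2 x}

/-- The energy `E(x) = α(|x|_U + |x|_H + 1) + β |x|_I`. -/
noncomputable def energy (α β : ℝ) {m : ℕ} (x : Fin m → MSym) : ℝ :=
  α * ((symCount x MSym.U : ℝ) + (symCount x MSym.H : ℝ) + 1) + β * (symCount x MSym.I : ℝ)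

/-- pairs of consecutive positions `(i, i+1)`. -/
def adjPairs (m : ℕ) : Finset (Fin m × Fin m) :=
  Finset.univ.filter (fun p => (p.2 : ℕ) = (p.1 : ℕ) + 1)

/-- The string `x` with the symbols `a`, `b` placed at positions `i`, `j`. -/
def setTwo {m : ℕ} (x : Fin m → MSym) (i j : Fin m) (a b : MSym) : Fin m → MSym :=
  Function.update (Function.update x i a) j b

def isUD (a : MSym) : Prop := a = MSym.U ∨ a = MSym.D
def isHI (a : MSym) : Prop := a = MSym.H ∨ a = MSym.I
instance : DecidablePred isUD := fun a => by unfold isUD; infer_instance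
instance : DecidablePred isHI := fun a => by unfold isHI; infer_instance

/-- The probability of moving from `x` to a *different* string `y` in one step
of the chain `M`: with probability 1/4 each, one of the four kinds of moves is
proposed (a uniformly random choice of positions together with the indicated
coin flips), and an (automatically valid) proposal `y ≠ x` is accepted with
probability 1/2. -/
noncomputable def stepWeight (α β : ℝ) {m : ℕ} (x y : Fin m → MSym) : ℝ :=
  -- move 1 : UD ↔ HH at a random pair of consecutive positions
  (1/4) * (1/((m : ℝ) - 1)) * (1/2) *
    (∑ p ∈ adjPairs m,
      ((if x p.1 = MSym.U ∧ x p.2 = MSym.D ∧ y = setTwo x p.1 p.2 MSym.H MSym.H then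
          Real.exp (-α) / (1 + Real.exp (-α)) else 0) +
       (if x p.1 = MSym.H ∧ x p.2 = MSym.H ∧ y = setTwo x p.1 p.2 MSym.U MSym.D then
          1 / (1 + Real.exp (-α)) else 0)))
  -- move 2 : H ↔ I at a random position
  + (1/4) * (1/(m : ℝ)) * (1/2) *
    (∑ i : Fin m,
      ((if x i = MSym.I ∧ y = Function.update x i MSym.H then
          Real.exp (-α) / (Real.exp (-α) + Real.exp (-β)) else 0) +
       (if x i = MSym.H ∧ y = Function.update x i MSym.I then
          Real.exp (-β) / (Real.exp (-α) + Real.exp (-β)) else 0)))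
  -- move 3 : swap the symbols at two uniform random positions, both in {U, D}
  + (1/4) * (1/((m : ℝ) * (m : ℝ))) * (1/2) *
    (∑ p : Fin m × Fin m,
      (if isUD (x p.1) ∧ isUD (x p.2) ∧ y = setTwo x p.1 p.2 (x p.2) (x p.1) then
        (1 : ℝ) else 0))
  -- move 4 : reverse an adjacent pair consisting of one of {U,D} and one of {H,I}
  + (1/4) * (1/((m : ℝ) - 1)) * (1/2) *
    (∑ p ∈ adjPairs m,
      (if ((isUD (x p.1) ∧ isHI (x p.2)) ∨ (isHI (x p.1) ∧ isUD (x p.2))) ∧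
          y = setTwo x p.1 p.2 (x p.2) (x p.1) then (1 : ℝ) else 0))

/-- The transition matrix of the Markov chain `M` on `𝔐²_m`: off the diagonal
the probability of the corresponding accepted move; proposals that are rejected,
invalid, or coincide with the current state contribute to the holding
probability on the diagonal. -/
noncomputable def transP (α β : ℝ) (m : ℕ) : Matrix (Motzkin2 m) (Motzkin2 m) ℝ :=
  fun x y =>
    if x = y then
      1 - ∑ z : Motzkin2 m, (if z = x then 0 else stepWeight α β x.1 z.1)
    else stepWeight α β x.1 y.1

/-- The Gibbs distribution `π(x) = e^{-E(x)}/Z` on `𝔐²_m`. -/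
noncomputable def gibbs (α β : ℝ) (m : ℕ) (x : Motzkin2 m) : ℝ :=
  Real.exp (-(energy α β x.1)) / ∑ y : Motzkin2 m, Real.exp (-(energy α β y.1))

/-- The spectral gap `1 - |λ₁|` of a transition matrix: one minus the largest
absolute value of an eigenvalue different from `λ₀ = 1`. -/
noncomputable def spectralGap {n : Type*} [Fintype n] [DecidableEq n]
    (P : Matrix n n ℝ) : ℝ :=
  1 - sSup {r : ℝ | ∃ μ : ℂ,
    μ ∈ spectrum ℂ (P.map (fun t => (t : ℂ))) ∧ μ ≠ 1 ∧ r = ‖μ‖}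

/-!
Every kind of move pairs a transformation with its inverse (`UD ↔ HH`, `H ↔ I`, and two
self-inverse swaps), and the two proposal probabilities are in the ratio of the Gibbs weights:
`UD → HH` raises the energy by `α`, `I → H` by `α - β`, and swaps preserve it. Hence the
off-diagonal part satisfies detailed balance, and so does the chain with its holding probability.
Each of the four kinds of moves carries total mass at most `1/8`, so the chain holds with
probability at least `1/2`, which makes the matrix stochastic and the chain aperiodic.

By detailed balance, positive transitions are symmetric, so irreducibility reduces to reaching the
all-`H` path. First recolour every `I` to `H`; then take the first `D` and the last `U` before it:
only `H`s lie in between, so the `D` can be slid leftwards until the pair is adjacent and becomes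
`HH`. Finally, if `μ` is stationary, `μ / π` is harmonic by detailed balance, hence constant by
the maximum principle, so `μ = π`.
-/

def DetailedBalance {S : Type*} (f : S → ℝ) (w : S → S → ℝ) : Prop :=
  ∀ x y, f x * w x y = f y * w y x

section DetailedBalance

variable {S : Type*} {f : S → ℝ}

theorem DetailedBalance.add {w w' : S → S → ℝ} (h : DetailedBalance f w)
    (h' : DetailedBalance f w') : DetailedBalance f (w + w') := fun x y => by
  simp only [Pi.add_apply, mul_add, h x y, h' x y]

theorem DetailedBalance.div_const {w : S → S → ℝ} (h : DetailedBalance f w) (c : ℝ) :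
    DetailedBalance (fun x => f x / c) w := fun x y => by
  simp only [div_mul_eq_mul_div, h x y]

theorem DetailedBalance.sum {κ : Type*} {s : Finset κ} {w : κ → S → S → ℝ}
    (h : ∀ p ∈ s, DetailedBalance f (w p)) :
    DetailedBalance f (fun x y => ∑ p ∈ s, w p x y) := fun x y => by
  simp only [Finset.mul_sum]
  exact Finset.sum_congr rfl fun p hp => h p hp x y

theorem DetailedBalance.const_mul {w : S → S → ℝ} (h : DetailedBalance f w) (c : ℝ) :
    DetailedBalance f (fun x y => c * w x y) := fun x y => by
  rw [mul_left_comm, h x y, mul_left_comm]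

theorem detailedBalance_ite_add (R R' : S → S → Prop) [DecidableRel R] [DecidableRel R']
    (hR : ∀ x y, R' x y ↔ R y x) (a b : ℝ) (h : ∀ x y, R x y → f x * a = f y * b) :
    DetailedBalance f (fun x y => (if R x y then a else 0) + (if R' x y then b else 0)) :=
  fun x y => by
    simp only [hR]
    have hxy := h x y
    have hyx := h y x
    split_ifs <;> grind

theorem detailedBalance_ite (R : S → S → Prop) [DecidableRel R] (c : ℝ)
    (h : ∀ x y, R x y → R y x ∧ f x = f y) :
    DetailedBalance f (fun x y => if R x y then c else 0) := fun x y => by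
  dsimp only
  by_cases hxy : R x y
  · rw [if_pos hxy, if_pos (h x y hxy).1, (h x y hxy).2]
  · by_cases hyx : R y x
    · exact absurd (h y x hyx).1 hxy
    · rw [if_neg hxy, if_neg hyx, mul_zero, mul_zero]

end DetailedBalance

section MarkovChain

open Relation Matrix

variable {ι : Type*}

def transitionGraph (P : Matrix ι ι ℝ) (x y : ι) : Prop :=
  0 < P x y

theorem DetailedBalance.transitionGraph_symm {π : ι → ℝ} {P : Matrix ι ι ℝ}
    (hP : DetailedBalance π P) (hπ : ∀ x, 0 < π x) {x y : ι}
    (h : transitionGraph P x y) : transitionGraph P y x := by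
  have := hP x y
  have := mul_pos (hπ x) h
  exact pos_of_mul_pos_right (by linarith) (hπ y).le

theorem DetailedBalance.reflTransGen_of_forall {π : ι → ℝ} {P : Matrix ι ι ℝ}
    (hP : DetailedBalance π P) (hπ : ∀ x, 0 < π x) (c : ι)
    (h : ∀ x, ReflTransGen (transitionGraph P) x c) (x y : ι) :
    ReflTransGen (transitionGraph P) x y :=
  (h x).trans <| ReflTransGen.mono (fun _ _ => hP.transitionGraph_symm hπ) _ _
    (ReflTransGen.swap _ _ (h y))

variable [Fintype ι] [DecidableEq ι]

theorem exists_pow_pos_of_reflTransGen {P : Matrix ι ι ℝ} (hP : P ∈ rowStochastic ℝ ι)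
    {x y : ι} (h : ReflTransGen (transitionGraph P) x y) : ∃ t : ℕ, 0 < (P ^ t) x y := by
  induction h with
  | refl => exact ⟨0, by simp⟩
  | @tail y z _ hyz ih =>
    obtain ⟨t, ht⟩ := ih
    refine ⟨t + 1, ?_⟩
    rw [pow_succ, mul_apply]
    exact (mul_pos ht hyz).trans_le <| single_le_sum (f := fun j => (P ^ t) x j * P j z)
      (fun w _ => mul_nonneg (nonneg_of_mem_rowStochastic (pow_mem hP t))
        (nonneg_of_mem_rowStochastic hP)) (mem_univ y)

theorem DetailedBalance.vecMul_eq {π : ι → ℝ} {P : Matrix ι ι ℝ} (hP : P ∈ rowStochastic ℝ ι)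
    (h : DetailedBalance π P) : π ᵥ* P = π := by
  ext y
  simp only [vecMul, dotProduct, h _ y, ← mul_sum, sum_row_of_mem_rowStochastic hP, mul_one]

theorem eq_of_mulVec_eq_of_forall_le {P : Matrix ι ι ℝ} (hP : P ∈ rowStochastic ℝ ι)
    {h : ι → ℝ} (hh : P *ᵥ h = h) {x y : ι} (hmax : ∀ z, h z ≤ h x)
    (hxy : transitionGraph P x y) : h y = h x := by
  have hzero : ∑ z, P x z * (h x - h z) = 0 := by
    have := congrFun hh x
    simp only [mulVec, dotProduct] at this
    simp only [mul_sub, sum_sub_distrib, ← sum_mul, sum_row_of_mem_rowStochastic hP, this]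
    ring
  have hterm := (sum_eq_zero_iff_of_nonneg fun z _ =>
    mul_nonneg (nonneg_of_mem_rowStochastic hP) (sub_nonneg.2 (hmax z))).1 hzero y (mem_univ y)
  have := (mul_eq_zero.1 hterm).resolve_left hxy.ne'
  linarith

theorem eq_of_mulVec_eq {P : Matrix ι ι ℝ} (hP : P ∈ rowStochastic ℝ ι)
    (hirr : ∀ x y, ReflTransGen (transitionGraph P) x y) {h : ι → ℝ} (hh : P *ᵥ h = h)
    (x y : ι) : h x = h y := by
  have : Nonempty ι := ⟨x⟩
  obtain ⟨x₀, hx₀⟩ := Finite.exists_max h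
  have hconst : ∀ z, h z = h x₀ := fun z => by
    induction hirr x₀ z with
    | refl => rfl
    | tail _ hyz ih =>
      exact (eq_of_mulVec_eq_of_forall_le hP hh (fun w => ih ▸ hx₀ w) hyz).trans ih
  rw [hconst x, hconst y]

theorem DetailedBalance.eq_of_vecMul_eq {π μ : ι → ℝ} {P : Matrix ι ι ℝ}
    (hP : P ∈ rowStochastic ℝ ι) (hirr : ∀ x y, ReflTransGen (transitionGraph P) x y)
    (hπ : ∀ x, 0 < π x) (hπP : DetailedBalance π P) (hπ1 : ∑ x, π x = 1)
    (hμ1 : ∑ x, μ x = 1) (hμ : μ ᵥ* P = μ) : μ = π := by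
  -- `μ / π` is harmonic by detailed balance, hence constant
  have hharm : P *ᵥ (fun x => μ x / π x) = fun x => μ x / π x := by
    ext y
    have hy := congrFun hμ y
    simp only [vecMul, dotProduct] at hy
    simp only [mulVec, dotProduct]
    rw [← hy, sum_div]
    refine sum_congr rfl fun x _ => ?_
    rw [mul_div_assoc', div_eq_div_iff (hπ x).ne' (hπ y).ne']
    linear_combination (-μ x) * hπP x y
  ext x
  have hprop : ∀ y, μ y = μ x / π x * π y := fun y => by
    rw [eq_of_mulVec_eq hP hirr hharm x y, div_mul_cancel₀ _ (hπ y).ne']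
  have hc : μ x / π x = 1 := by
    rwa [sum_congr rfl fun y _ => hprop y, ← mul_sum, hπ1, mul_one] at hμ1
  rw [hprop x, hc, one_mul]

end MarkovChain

section HoldingMatrix

open Matrix

variable {ι : Type*} [Fintype ι] [DecidableEq ι]

def holdingMatrix (w : ι → ι → ℝ) : Matrix ι ι ℝ :=
  fun x y => if x = y then 1 - ∑ z, (if z = x then 0 else w x z) else w x y

theorem holdingMatrix_apply_of_ne (w : ι → ι → ℝ) {x y : ι} (h : x ≠ y) :
    holdingMatrix w x y = w x y :=
  if_neg h

theorem holdingMatrix_apply_self (w : ι → ι → ℝ) (x : ι) :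
    holdingMatrix w x x = 1 - ∑ z, (if z = x then 0 else w x z) :=
  if_pos rfl

theorem sub_sum_le_holdingMatrix_apply_self {w : ι → ι → ℝ} (hw : ∀ x y, 0 ≤ w x y) (x : ι) :
    1 - ∑ y, w x y ≤ holdingMatrix w x x := by
  rw [holdingMatrix_apply_self]
  gcongr with z
  split_ifs
  exacts [hw x z, le_rfl]

theorem sum_holdingMatrix_apply (w : ι → ι → ℝ) (x : ι) : ∑ y, holdingMatrix w x y = 1 := by
  have hoff : ∑ y ∈ univ.erase x, holdingMatrix w x y = ∑ z, (if z = x then 0 else w x z) := by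
    rw [← add_sum_erase _ _ (mem_univ x), if_pos rfl, zero_add]
    refine sum_congr rfl fun y hy => ?_
    have hyx := ne_of_mem_erase hy
    rw [holdingMatrix_apply_of_ne w hyx.symm, if_neg hyx]
  rw [← add_sum_erase _ _ (mem_univ x), hoff, holdingMatrix_apply_self, sub_add_cancel]

theorem holdingMatrix_mem_rowStochastic {w : ι → ι → ℝ} (hw : ∀ x y, 0 ≤ w x y)
    (hsum : ∀ x, ∑ y, w x y ≤ 1) : holdingMatrix w ∈ rowStochastic ℝ ι := by
  refine mem_rowStochastic_iff_sum.2 ⟨fun x y => ?_, sum_holdingMatrix_apply w⟩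
  rcases eq_or_ne x y with rfl | hxy
  · linarith [sub_sum_le_holdingMatrix_apply_self hw x, hsum x]
  · rw [holdingMatrix_apply_of_ne w hxy]
    exact hw x y

theorem DetailedBalance.holdingMatrix {π : ι → ℝ} {w : ι → ι → ℝ} (h : DetailedBalance π w) :
    DetailedBalance π (holdingMatrix w) := fun x y => by
  rcases eq_or_ne x y with rfl | hxy
  · rfl
  · rw [holdingMatrix_apply_of_ne w hxy, holdingMatrix_apply_of_ne w hxy.symm, h]

end HoldingMatrix

theorem sum_subtype_le_sum {T : Type*} [Fintype T] {P : T → Prop} [DecidablePred P]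
    {f : T → ℝ} (hf : ∀ y, 0 ≤ f y) : ∑ z : Subtype P, f z.1 ≤ ∑ y, f y := by
  rw [← sum_subtype (univ.filter P) (by simp)]
  exact sum_le_univ_sum_of_nonneg hf

theorem sum_ite_and_eq {T : Type*} [Fintype T] [DecidableEq T] (A : Prop) [Decidable A] (v : T)
    (a : ℝ) : ∑ y, (if A ∧ y = v then a else 0) = if A then a else 0 := by
  by_cases hA : A <;> simp [hA]

section MoveProb

variable {κ : Type*}

/-- The probability of an accepted move of one of four kinds: the kind is chosen with probability
`1/4`, a site `p ∈ S` with probability `1/N`, the proposal with probability `w p`, and it is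
accepted with probability `1/2`. -/
noncomputable def moveProb (N : ℝ) (S : Finset κ) (w : κ → ℝ) : ℝ :=
  1/4 * (1/N) * (1/2) * ∑ p ∈ S, w p

theorem moveProb_nonneg {N : ℝ} (hN : 0 ≤ N) {S : Finset κ} {w : κ → ℝ}
    (hw : ∀ p ∈ S, 0 ≤ w p) : 0 ≤ moveProb N S w := by
  unfold moveProb
  have := sum_nonneg hw
  positivity

theorem moveProb_pos {N : ℝ} (hN : 0 < N) {S : Finset κ} {w : κ → ℝ}
    (hw : ∀ p ∈ S, 0 ≤ w p) {p : κ} (hp : p ∈ S) (hwp : 0 < w p) : 0 < moveProb N S w := by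
  unfold moveProb
  have := hwp.trans_le (single_le_sum hw hp)
  positivity

theorem sum_moveProb_le {T : Type*} [Fintype T] {N : ℝ} {S : Finset κ} (hN : (#S : ℝ) ≤ N)
    {w : κ → T → ℝ} (hw1 : ∀ p ∈ S, ∑ y, w p y ≤ 1) :
    ∑ y, moveProb N S (fun p => w p y) ≤ 1/8 := by
  have hS : ∑ p ∈ S, ∑ y, w p y ≤ N := (sum_le_card_nsmul S _ 1 hw1).trans (by simpa using hN)
  have hN0 : 0 ≤ N := (Nat.cast_nonneg _).trans hN
  simp only [moveProb, ← mul_sum]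
  rw [sum_comm]
  rcases hN0.eq_or_lt with rfl | hNpos
  · simp
  · calc 1/4 * (1/N) * (1/2) * ∑ p ∈ S, ∑ y, w p y ≤ 1/4 * (1/N) * (1/2) * N := by gcongr
      _ = 1/8 := by field_simp; norm_num

theorem DetailedBalance.moveProb {S : Type*} {f : S → ℝ} {N : ℝ} {s : Finset κ}
    {w : S → S → κ → ℝ} (h : ∀ p ∈ s, DetailedBalance f (fun x y => w x y p)) :
    DetailedBalance f (fun x y => _root_.moveProb N s (w x y)) :=
  (DetailedBalance.sum h).const_mul _

end MoveProb

section Strings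

open Function MSym

variable {m : ℕ}

theorem natCast_card_filter_update {R ι β : Type*} [Ring R] [Fintype ι] [DecidableEq ι]
    [DecidableEq β] (P : ι → Prop) [DecidablePred P] (x : ι → β) (i : ι) (c a : β) :
    (#{k | P k ∧ update x i c k = a} : R) =
      #{k | P k ∧ x k = a} + (if P i ∧ c = a then 1 else 0) - (if P i ∧ x i = a then 1 else 0) := by
  simp only [natCast_card_filter]
  rw [← add_sum_erase _ _ (mem_univ i), ← add_sum_erase _ _ (mem_univ i),
    sum_congr rfl fun k hk => by rw [update_of_ne (ne_of_mem_erase hk)], update_self]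
  abel

theorem natCast_symCount_update {R : Type*} [Ring R] (x : Fin m → MSym) (i : Fin m)
    (c a : MSym) :
    (symCount (update x i c) a : R) =
      symCount x a + (if c = a then 1 else 0) - (if x i = a then 1 else 0) := by
  simpa [symCount] using natCast_card_filter_update (R := R) (fun _ => True) x i c a

theorem natCast_symCountPrefix_update {R : Type*} [Ring R] (x : Fin m → MSym) (i : Fin m)
    (c a : MSym) (q : Fin m) :
    (symCountPrefix (update x i c) a q : R) =
      symCountPrefix x a q + (if i ≤ q ∧ c = a then 1 else 0) -
        (if i ≤ q ∧ x i = a then 1 else 0) :=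
  natCast_card_filter_update (· ≤ q) x i c a

theorem natCast_symCount_setTwo {R : Type*} [Ring R] (x : Fin m → MSym) {i j : Fin m}
    (hij : i ≠ j) (c d a : MSym) :
    (symCount (setTwo x i j c d) a : R) =
      symCount x a + (if c = a then 1 else 0) - (if x i = a then 1 else 0) +
        (if d = a then 1 else 0) - (if x j = a then 1 else 0) := by
  rw [setTwo, natCast_symCount_update, natCast_symCount_update, update_of_ne hij.symm]

theorem natCast_symCountPrefix_setTwo {R : Type*} [Ring R] (x : Fin m → MSym) {i j : Fin m}
    (hij : i ≠ j) (c d a : MSym) (q : Fin m) :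
    (symCountPrefix (setTwo x i j c d) a q : R) =
      symCountPrefix x a q + (if i ≤ q ∧ c = a then 1 else 0) -
        (if i ≤ q ∧ x i = a then 1 else 0) + (if j ≤ q ∧ d = a then 1 else 0) -
        (if j ≤ q ∧ x j = a then 1 else 0) := by
  rw [setTwo, natCast_symCountPrefix_update, natCast_symCountPrefix_update,
    update_of_ne hij.symm]

theorem ne_of_mem_adjPairs {p : Fin m × Fin m} (hp : p ∈ adjPairs m) : p.1 ≠ p.2 := by
  have := (mem_filter.1 hp).2
  omega

theorem symCount_comp_perm (x : Fin m → MSym) (σ : Equiv.Perm (Fin m)) (a : MSym) :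
    symCount (x ∘ σ) a = symCount x a := by
  simp only [symCount, card_filter]
  exact Equiv.sum_comp σ (fun k => if x k = a then 1 else 0)

theorem setTwo_swap_eq_comp (x : Fin m → MSym) (i j : Fin m) :
    setTwo x i j (x j) (x i) = x ∘ Equiv.swap i j := by
  ext k
  rcases eq_or_ne k j with rfl | hkj
  · simp [setTwo]
  rcases eq_or_ne k i with rfl | hki
  · simp [setTwo, hkj]
  · simp [setTwo, hki, hkj, Equiv.swap_apply_of_ne_of_ne]

theorem eq_setTwo_comm {x y : Fin m → MSym} {i j : Fin m} (hij : i ≠ j) {a b a' b' : MSym} :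
    (x i = a ∧ x j = b ∧ y = setTwo x i j a' b') ↔
      (y i = a' ∧ y j = b' ∧ x = setTwo y i j a b) := by
  have key : ∀ {x y : Fin m → MSym} {a b a' b' : MSym}, x i = a → x j = b →
      y = setTwo x i j a' b' → y i = a' ∧ y j = b' ∧ x = setTwo y i j a b := by
    rintro x y a b a' b' rfl rfl rfl
    refine ⟨by simp [setTwo, hij], by simp [setTwo], ?_⟩
    ext k
    rcases eq_or_ne k j with rfl | hkj
    · simp [setTwo]
    rcases eq_or_ne k i with rfl | hki
    · simp [setTwo, hkj]
    · simp [setTwo, hki, hkj]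
  exact ⟨fun ⟨h1, h2, h3⟩ => key h1 h2 h3, fun ⟨h1, h2, h3⟩ => key h1 h2 h3⟩

theorem eq_update_comm {x y : Fin m → MSym} {i : Fin m} {a a' : MSym} :
    (x i = a ∧ y = update x i a') ↔ (y i = a' ∧ x = update y i a) := by
  constructor <;> rintro ⟨h, rfl⟩ <;> simp [← h]

end Strings

section Moves

open Function MSym

variable {m : ℕ}

theorem energy_comp_perm (α β : ℝ) (x : Fin m → MSym) (σ : Equiv.Perm (Fin m)) :
    energy α β (x ∘ σ) = energy α β x := by
  simp only [energy, symCount_comp_perm]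

theorem energy_setTwo_H_H (α β : ℝ) {x : Fin m → MSym} {i j : Fin m} (hij : i ≠ j)
    (hi : x i = U) (hj : x j = D) : energy α β (setTwo x i j H H) = energy α β x + α := by
  simp only [energy, natCast_symCount_setTwo x hij]
  simp [hi, hj]
  ring

theorem energy_update_H (α β : ℝ) {x : Fin m → MSym} {i : Fin m} (hi : x i = I) :
    energy α β (update x i H) = energy α β x + α - β := by
  simp only [energy, natCast_symCount_update]
  simp [hi]
  ring

theorem setTwo_swap_symm {x y : Fin m → MSym} {i j : Fin m}
    (h : y = setTwo x i j (x j) (x i)) :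
    y i = x j ∧ y j = x i ∧ x = setTwo y i j (y j) (y i) := by
  subst h
  rw [setTwo_swap_eq_comp x, setTwo_swap_eq_comp (x ∘ _)]
  refine ⟨by simp, by simp, ?_⟩
  ext k
  simp [Equiv.swap_apply_self]

noncomputable def flipWeight (α : ℝ) (x y : Fin m → MSym) (p : Fin m × Fin m) : ℝ :=
  (if x p.1 = U ∧ x p.2 = D ∧ y = setTwo x p.1 p.2 H H then
      Real.exp (-α) / (1 + Real.exp (-α)) else 0) +
    (if x p.1 = H ∧ x p.2 = H ∧ y = setTwo x p.1 p.2 U D then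
      1 / (1 + Real.exp (-α)) else 0)

noncomputable def recolorWeight (α β : ℝ) (x y : Fin m → MSym) (i : Fin m) : ℝ :=
  (if x i = I ∧ y = update x i H then
      Real.exp (-α) / (Real.exp (-α) + Real.exp (-β)) else 0) +
    (if x i = H ∧ y = update x i I then
      Real.exp (-β) / (Real.exp (-α) + Real.exp (-β)) else 0)

def swapWeight (x y : Fin m → MSym) (p : Fin m × Fin m) : ℝ :=
  if isUD (x p.1) ∧ isUD (x p.2) ∧ y = setTwo x p.1 p.2 (x p.2) (x p.1) then 1 else 0

def reverseWeight (x y : Fin m → MSym) (p : Fin m × Fin m) : ℝ :=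
  if ((isUD (x p.1) ∧ isHI (x p.2)) ∨ (isHI (x p.1) ∧ isUD (x p.2))) ∧
      y = setTwo x p.1 p.2 (x p.2) (x p.1) then 1 else 0

theorem stepWeight_eq (α β : ℝ) (x y : Fin m → MSym) :
    stepWeight α β x y =
      moveProb ((m : ℝ) - 1) (adjPairs m) (flipWeight α x y) +
        moveProb m univ (recolorWeight α β x y) +
        moveProb ((m : ℝ) * m) univ (swapWeight x y) +
        moveProb ((m : ℝ) - 1) (adjPairs m) (reverseWeight x y) :=
  rfl

variable (α β : ℝ)

theorem detailedBalance_flipWeight {p : Fin m × Fin m} (hp : p.1 ≠ p.2) :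
    DetailedBalance (fun x => Real.exp (-energy α β x)) (fun x y => flipWeight α x y p) := by
  unfold flipWeight
  refine detailedBalance_ite_add _ _ (fun x y => eq_setTwo_comm hp) _ _ ?_
  rintro x y ⟨hU, hD, rfl⟩
  rw [energy_setTwo_H_H α β hp hU hD, neg_add, Real.exp_add]
  ring

theorem detailedBalance_recolorWeight (i : Fin m) :
    DetailedBalance (fun x => Real.exp (-energy α β x)) (fun x y => recolorWeight α β x y i) := by
  unfold recolorWeight
  refine detailedBalance_ite_add _ _ (fun x y => eq_update_comm) _ _ ?_
  rintro x y ⟨hI, rfl⟩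
  have : Real.exp (-energy α β (update x i H)) * Real.exp (-β) =
      Real.exp (-energy α β x) * Real.exp (-α) := by
    rw [energy_update_H α β hI, ← Real.exp_add, ← Real.exp_add]
    ring_nf
  rw [mul_div_assoc', mul_div_assoc', this]

theorem detailedBalance_swapWeight (p : Fin m × Fin m) :
    DetailedBalance (fun x => Real.exp (-energy α β x)) (fun x y => swapWeight x y p) := by
  refine detailedBalance_ite _ _ ?_
  rintro x y ⟨h1, h2, hy⟩
  obtain ⟨hy1, hy2, hx⟩ := setTwo_swap_symm hy
  refine ⟨⟨hy1 ▸ h2, hy2 ▸ h1, hx⟩, ?_⟩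
  rw [hy, setTwo_swap_eq_comp, energy_comp_perm]

theorem detailedBalance_reverseWeight (p : Fin m × Fin m) :
    DetailedBalance (fun x => Real.exp (-energy α β x)) (fun x y => reverseWeight x y p) := by
  refine detailedBalance_ite _ _ ?_
  rintro x y ⟨hxp, hy⟩
  obtain ⟨hy1, hy2, hx⟩ := setTwo_swap_symm hy
  refine ⟨⟨?_, hx⟩, ?_⟩
  · rw [hy1, hy2]
    exact hxp.symm.imp And.symm And.symm
  · rw [hy, setTwo_swap_eq_comp, energy_comp_perm]

theorem detailedBalance_stepWeight :
    DetailedBalance (fun x => Real.exp (-energy α β x)) (stepWeight (m := m) α β) :=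
  fun x y => by
    simp only [stepWeight_eq]
    exact (((DetailedBalance.moveProb fun p hp =>
        detailedBalance_flipWeight α β (ne_of_mem_adjPairs hp)).add
      (DetailedBalance.moveProb fun i _ => detailedBalance_recolorWeight α β i)).add
      (DetailedBalance.moveProb fun p _ => detailedBalance_swapWeight α β p)).add
      (DetailedBalance.moveProb fun p _ => detailedBalance_reverseWeight α β p) x y

end Moves

section Mass

open Function MSym

variable {m : ℕ} (α β : ℝ)

theorem natCast_card_adjPairs_le (hm : 1 ≤ m) : (#(adjPairs m) : ℝ) ≤ m - 1 := by
  have h : #(adjPairs m) ≤ #(range (m - 1)) :=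
    card_le_card_of_injOn (fun p => (p.1 : ℕ))
      (fun p hp => by
        have := (mem_filter.1 hp).2
        simp only [coe_range, Set.mem_Iio]
        omega)
      (fun p hp q hq hpq => by
        have h1 := (mem_filter.1 hp).2
        have h2 := (mem_filter.1 hq).2
        have : (p.1 : ℕ) = q.1 := hpq
        exact Prod.ext (Fin.ext this) (Fin.ext (by omega)))
  rw [card_range] at h
  have := Nat.cast_le (α := ℝ) |>.2 h
  rwa [Nat.cast_sub hm, Nat.cast_one] at this

theorem flipWeight_nonneg (x y : Fin m → MSym) (p : Fin m × Fin m) :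
    0 ≤ flipWeight α x y p := by
  unfold flipWeight
  positivity

theorem recolorWeight_nonneg (x y : Fin m → MSym) (i : Fin m) :
    0 ≤ recolorWeight α β x y i := by
  unfold recolorWeight
  positivity

theorem swapWeight_nonneg (x y : Fin m → MSym) (p : Fin m × Fin m) : 0 ≤ swapWeight x y p := by
  unfold swapWeight
  positivity

theorem reverseWeight_nonneg (x y : Fin m → MSym) (p : Fin m × Fin m) :
    0 ≤ reverseWeight x y p := by
  unfold reverseWeight
  positivity

theorem sum_flipWeight_le (x : Fin m → MSym) (p : Fin m × Fin m) :
    ∑ y, flipWeight α x y p ≤ 1 := by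
  simp only [flipWeight, sum_add_distrib, ← and_assoc, sum_ite_and_eq]
  have hsum : Real.exp (-α) / (1 + Real.exp (-α)) + 1 / (1 + Real.exp (-α)) = 1 := by
    field_simp
    ring
  have ha : 0 ≤ Real.exp (-α) / (1 + Real.exp (-α)) := by positivity
  have hb : 0 ≤ 1 / (1 + Real.exp (-α)) := by positivity
  split_ifs <;> linarith

theorem sum_recolorWeight_le (x : Fin m → MSym) (i : Fin m) :
    ∑ y, recolorWeight α β x y i ≤ 1 := by
  simp only [recolorWeight, sum_add_distrib, sum_ite_and_eq]
  have hsum : Real.exp (-α) / (Real.exp (-α) + Real.exp (-β)) +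
      Real.exp (-β) / (Real.exp (-α) + Real.exp (-β)) = 1 := by
    field_simp
  have ha : 0 ≤ Real.exp (-α) / (Real.exp (-α) + Real.exp (-β)) := by positivity
  have hb : 0 ≤ Real.exp (-β) / (Real.exp (-α) + Real.exp (-β)) := by positivity
  split_ifs <;> linarith

theorem sum_swapWeight_le (x : Fin m → MSym) (p : Fin m × Fin m) :
    ∑ y, swapWeight x y p ≤ 1 := by
  simp only [swapWeight, ← and_assoc, sum_ite_and_eq]
  split_ifs <;> norm_num

theorem sum_reverseWeight_le (x : Fin m → MSym) (p : Fin m × Fin m) :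
    ∑ y, reverseWeight x y p ≤ 1 := by
  simp only [reverseWeight, sum_ite_and_eq]
  split_ifs <;> norm_num

theorem stepWeight_terms_nonneg (hm : 1 ≤ m) (x y : Fin m → MSym) :
    0 ≤ moveProb ((m : ℝ) - 1) (adjPairs m) (flipWeight α x y) ∧
      0 ≤ moveProb m univ (recolorWeight α β x y) ∧
      0 ≤ moveProb ((m : ℝ) * m) univ (swapWeight x y) ∧
      0 ≤ moveProb ((m : ℝ) - 1) (adjPairs m) (reverseWeight x y) := by
  have hm1 : (0 : ℝ) ≤ m - 1 := sub_nonneg.2 (Nat.one_le_cast.2 hm)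
  exact ⟨moveProb_nonneg hm1 fun p _ => flipWeight_nonneg α x y p,
    moveProb_nonneg (Nat.cast_nonneg m) fun i _ => recolorWeight_nonneg α β x y i,
    moveProb_nonneg (by positivity) fun p _ => swapWeight_nonneg x y p,
    moveProb_nonneg hm1 fun p _ => reverseWeight_nonneg x y p⟩

theorem stepWeight_nonneg (hm : 1 ≤ m) (x y : Fin m → MSym) : 0 ≤ stepWeight α β x y := by
  obtain ⟨h₁, h₂, h₃, h₄⟩ := stepWeight_terms_nonneg α β hm x y
  rw [stepWeight_eq]
  linarith

theorem sum_stepWeight_le (hm : 1 ≤ m) (x : Fin m → MSym) : ∑ y, stepWeight α β x y ≤ 1/2 := by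
  simp only [stepWeight_eq, sum_add_distrib]
  have := sum_moveProb_le (natCast_card_adjPairs_le hm) fun p _ => sum_flipWeight_le α x p
  have := sum_moveProb_le (N := m) (S := univ) (by simp) fun i _ => sum_recolorWeight_le α β x i
  have := sum_moveProb_le (N := m * m) (S := univ) (by simp) fun p _ => sum_swapWeight_le x p
  have := sum_moveProb_le (natCast_card_adjPairs_le hm) fun p _ => sum_reverseWeight_le x p
  linarith

theorem stepWeight_pos (hm : 1 ≤ m) {x y : Fin m → MSym}
    (h : (∃ p ∈ adjPairs m, 0 < flipWeight α x y p) ∨ (∃ i, 0 < recolorWeight α β x y i) ∨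
      ∃ p ∈ adjPairs m, 0 < reverseWeight x y p) :
    0 < stepWeight α β x y := by
  have hadj : ∀ p ∈ adjPairs m, (0 : ℝ) < m - 1 := fun p hp => by
    have := (mem_filter.1 hp).2
    have : (2 : ℝ) ≤ m := by exact_mod_cast (by omega : 2 ≤ m)
    linarith
  obtain ⟨h₁, h₂, h₃, h₄⟩ := stepWeight_terms_nonneg α β hm x y
  rw [stepWeight_eq]
  rcases h with ⟨p, hp, h⟩ | ⟨i, h⟩ | ⟨p, hp, h⟩
  · have := moveProb_pos (hadj p hp) (fun p _ => flipWeight_nonneg α x y p) hp h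
    linarith
  · have := moveProb_pos (N := m) (by exact_mod_cast hm)
      (fun i _ => recolorWeight_nonneg α β x y i) (mem_univ i) h
    linarith
  · have := moveProb_pos (hadj p hp) (fun p _ => reverseWeight_nonneg x y p) hp h
    linarith

end Mass

section Chain

variable {m : ℕ} (α β : ℝ)

def allH (m : ℕ) : Fin m → MSym := fun _ => MSym.H

theorem isMotzkin2_allH (m : ℕ) : IsMotzkin2 (allH m) := by
  constructor
  · intro j
    simp [symCountPrefix, allH]
  · simp [symCount, allH]

instance (m : ℕ) : Nonempty (Motzkin2 m) :=
  ⟨⟨allH m, isMotzkin2_allH m⟩⟩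

theorem transP_eq_holdingMatrix :
    transP α β m = holdingMatrix fun x y => stepWeight α β x.1 y.1 :=
  rfl

theorem half_le_transP_self (hm : 1 ≤ m) (x : Motzkin2 m) : 1/2 ≤ transP α β m x x := by
  have := sum_subtype_le_sum (P := IsMotzkin2) (stepWeight_nonneg α β hm x.1)
  have := sub_sum_le_holdingMatrix_apply_self
    (fun x y : Motzkin2 m => stepWeight_nonneg α β hm x.1 y.1) x
  have := sum_stepWeight_le α β hm x.1
  rw [transP_eq_holdingMatrix]
  linarith

theorem transP_mem_rowStochastic (hm : 1 ≤ m) : transP α β m ∈ Matrix.rowStochastic ℝ _ :=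
  holdingMatrix_mem_rowStochastic (fun x y => stepWeight_nonneg α β hm x.1 y.1) fun x =>
    (sum_subtype_le_sum (stepWeight_nonneg α β hm x.1)).trans
      ((sum_stepWeight_le α β hm x.1).trans (by norm_num))

theorem transitionGraph_transP (hm : 1 ≤ m) {x y : Motzkin2 m}
    (h : 0 < stepWeight α β x.1 y.1) : transitionGraph (transP α β m) x y := by
  rcases eq_or_ne x y with rfl | hxy
  · exact one_half_pos.trans_le (half_le_transP_self α β hm x)
  · rw [transitionGraph, transP_eq_holdingMatrix, holdingMatrix_apply_of_ne _ hxy]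
    exact h

theorem gibbs_pos (x : Motzkin2 m) : 0 < gibbs α β m x :=
  div_pos (Real.exp_pos _) (sum_pos (fun _ _ => Real.exp_pos _) ⟨x, mem_univ x⟩)

theorem sum_gibbs : ∑ x, gibbs α β m x = 1 := by
  simp only [gibbs, ← sum_div]
  exact div_self (sum_pos (fun _ _ => Real.exp_pos _) univ_nonempty).ne'

theorem detailedBalance_gibbs_transP : DetailedBalance (gibbs α β m) (transP α β m) := by
  have h : DetailedBalance (fun x : Motzkin2 m => Real.exp (-energy α β x.1))
      (fun x y => stepWeight α β x.1 y.1) := fun x y => detailedBalance_stepWeight α β x.1 y.1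
  exact (h.div_const _).holdingMatrix

end Chain

section Validity

open Function MSym

variable {m : ℕ} {x : Fin m → MSym}

theorem symCountPrefix_eq_zero {a : MSym} {q : Fin m} (h : ∀ p ≤ q, x p ≠ a) :
    symCountPrefix x a q = 0 :=
  card_eq_zero.2 <| filter_eq_empty_iff.2 fun p _ hp => h p hp.1 hp.2

theorem one_le_symCountPrefix {a : MSym} {p q : Fin m} (hp : x p = a) (hpq : p ≤ q) :
    1 ≤ symCountPrefix x a q :=
  card_pos.2 ⟨p, mem_filter.2 ⟨mem_univ p, hpq, hp⟩⟩

theorem IsMotzkin2.update_H (hx : IsMotzkin2 x) {i : Fin m} (hi : x i = I) :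
    IsMotzkin2 (update x i H) := by
  refine ⟨fun q => ?_, ?_⟩
  · have hU := natCast_symCountPrefix_update (R := ℤ) x i H U q
    have hD := natCast_symCountPrefix_update (R := ℤ) x i H D q
    simp [hi] at hU hD
    have := hx.1 q
    omega
  · have hU := natCast_symCount_update (R := ℤ) x i H U
    have hD := natCast_symCount_update (R := ℤ) x i H D
    simp [hi] at hU hD
    have := hx.2
    omega

theorem IsMotzkin2.setTwo_H_H (hx : IsMotzkin2 x) {i j : Fin m} (hi : x i = U) (hj : x j = D)
    (hij : i < j) (hfirst : ∀ p < j, x p ≠ D) : IsMotzkin2 (setTwo x i j H H) := by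
  refine ⟨fun q => ?_, ?_⟩
  · have hU := natCast_symCountPrefix_setTwo (R := ℤ) x hij.ne H H U q
    have hD := natCast_symCountPrefix_setTwo (R := ℤ) x hij.ne H H D q
    have := hx.1 q
    by_cases hjq : j ≤ q
    · simp [hi, hj, hjq, hij.le.trans hjq] at hU hD
      omega
    have h0 := symCountPrefix_eq_zero fun p hp => hfirst p (hp.trans_lt (not_le.1 hjq))
    by_cases hiq : i ≤ q
    · have := one_le_symCountPrefix hi hiq
      simp [hi, hj, hjq, hiq] at hU hD
      omega
    · simp [hi, hj, hjq, hiq] at hU hD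
      omega
  · have hU := natCast_symCount_setTwo (R := ℤ) x hij.ne H H U
    have hD := natCast_symCount_setTwo (R := ℤ) x hij.ne H H D
    simp [hi, hj] at hU hD
    have := hx.2
    omega

theorem IsMotzkin2.setTwo_D_H (hx : IsMotzkin2 x) {i k j : Fin m} (hi : x i = U) (hik : i < k)
    (hk : x k = H) (hj : x j = D) (hkj : (j : ℕ) = k + 1) (hfirst : ∀ p < j, x p ≠ D) :
    IsMotzkin2 (setTwo x k j D H) := by
  have hkj' : k < j := by rw [Fin.lt_def]; omega
  refine ⟨fun q => ?_, ?_⟩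
  · have hU := natCast_symCountPrefix_setTwo (R := ℤ) x hkj'.ne D H U q
    have hD := natCast_symCountPrefix_setTwo (R := ℤ) x hkj'.ne D H D q
    have := hx.1 q
    by_cases hjq : j ≤ q
    · simp [hk, hj, hjq, hkj'.le.trans hjq] at hU hD
      omega
    by_cases hkq : k ≤ q
    · have h0 := symCountPrefix_eq_zero fun p hp => hfirst p (hp.trans_lt (not_le.1 hjq))
      have := one_le_symCountPrefix hi (hik.le.trans hkq)
      simp [hk, hj, hjq, hkq] at hU hD
      omega
    · simp [hk, hj, hjq, hkq] at hU hD
      omega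
  · have hU := natCast_symCount_setTwo (R := ℤ) x hkj'.ne D H U
    have hD := natCast_symCount_setTwo (R := ℤ) x hkj'.ne D H D
    simp [hk, hj] at hU hD
    have := hx.2
    omega

theorem IsMotzkin2.exists_U_lt (hx : IsMotzkin2 x) {j : Fin m} (hj : x j = D) :
    ∃ i < j, x i = U := by
  have hU : 0 < symCountPrefix x U j := (one_le_symCountPrefix hj le_rfl).trans (hx.1 j)
  obtain ⟨i, hi⟩ := card_pos.1 hU
  obtain ⟨hij, hiU⟩ := (mem_filter.1 hi).2
  exact ⟨i, hij.lt_of_ne (by rintro rfl; simp [hj] at hiU), hiU⟩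

theorem IsMotzkin2.exists_U_H_D (hx : IsMotzkin2 x) (hI : ∀ p, x p ≠ I) {j₀ : Fin m}
    (hj₀ : x j₀ = D) : ∃ i j, i < j ∧ x i = U ∧ x j = D ∧ (∀ p < j, x p ≠ D) ∧
      ∀ p, i < p → p < j → x p = H := by
  obtain ⟨j, hj, hjmin⟩ := (univ.filter (x · = D)).exists_min_image id
    ⟨j₀, mem_filter.2 ⟨mem_univ j₀, hj₀⟩⟩
  have hjD : x j = D := (mem_filter.1 hj).2
  have hfirst : ∀ p < j, x p ≠ D := fun p hp hpD =>
    (hjmin p (mem_filter.2 ⟨mem_univ p, hpD⟩)).not_gt hp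
  obtain ⟨i₀, hi₀j, hi₀⟩ := hx.exists_U_lt hjD
  obtain ⟨i, hi, himax⟩ := (univ.filter (fun p => p < j ∧ x p = U)).exists_max_image id
    ⟨i₀, mem_filter.2 ⟨mem_univ _, hi₀j, hi₀⟩⟩
  obtain ⟨hij, hiU⟩ := (mem_filter.1 hi).2
  refine ⟨i, j, hij, hiU, hjD, hfirst, fun p hip hpj => ?_⟩
  cases h : x p with
  | U => exact absurd (himax p (mem_filter.2 ⟨mem_univ p, hpj, h⟩)) (not_le.2 hip)
  | H => rfl
  | I => exact absurd h (hI p)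
  | D => exact absurd h (hfirst p hpj)

theorem IsMotzkin2.eq_allH (hx : IsMotzkin2 x) (hI : ∀ p, x p ≠ I) (hD : ∀ p, x p ≠ D) :
    x = allH m := by
  have hD0 : symCount x D = 0 := card_eq_zero.2 (filter_eq_empty_iff.2 fun p _ => hD p)
  ext p
  cases h : x p with
  | U =>
    have : 0 < symCount x U := card_pos.2 ⟨p, by simp [h]⟩
    have := hx.2
    omega
  | H => rfl
  | I => exact absurd h (hI p)
  | D => exact absurd h (hD p)

end Validity

section Irreducible

open Function MSym Relation

variable {m : ℕ} (α β : ℝ)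

theorem setTwo_apply (x : Fin m → MSym) (i j : Fin m) (a b : MSym) (p : Fin m) :
    setTwo x i j a b p = if p = j then b else if p = i then a else x p := by
  simp only [setTwo, update_apply]

theorem reflTransGen_setTwo_H_H (hm : 1 ≤ m) (n : ℕ) {x : Fin m → MSym} (hx : IsMotzkin2 x)
    {i j : Fin m} (hij : (j : ℕ) = i + 1 + n) (hi : x i = U) (hj : x j = D)
    (hfirst : ∀ p < j, x p ≠ D) (hH : ∀ p, i < p → p < j → x p = H) (z : Motzkin2 m)
    (hz : z.1 = setTwo x i j H H) :
    ReflTransGen (transitionGraph (transP α β m)) ⟨x, hx⟩ z := by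
  induction n generalizing x j with
  | zero =>
    refine ReflTransGen.single (transitionGraph_transP α β hm (stepWeight_pos α β hm
      (Or.inl ⟨(i, j), mem_filter.2 ⟨mem_univ _, hij⟩, ?_⟩)))
    rw [flipWeight, if_pos ⟨hi, hj, hz⟩]
    positivity
  | succ n ih =>
    set k : Fin m := ⟨j - 1, by omega⟩
    have hik : i < k := by rw [Fin.lt_def]; simp only [k]; omega
    have hkj : k < j := by rw [Fin.lt_def]; simp only [k]; omega
    have hk : x k = H := hH k hik hkj
    have hy := hx.setTwo_D_H hi hik hk hj (by simp only [k]; omega) hfirst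
    refine ReflTransGen.head (b := ⟨setTwo x k j D H, hy⟩) ?_ (ih hy (j := k) ?_ ?_ ?_ ?_ ?_ ?_)
    · refine transitionGraph_transP α β hm (stepWeight_pos α β hm
        (Or.inr (Or.inr ⟨(k, j), mem_filter.2 ⟨mem_univ _, by simp only [k]; omega⟩, ?_⟩)))
      rw [reverseWeight, if_pos ⟨Or.inr ⟨Or.inl hk, Or.inr hj⟩, by simp only [hj, hk]⟩]
      exact one_pos
    · simp only [k]
      omega
    · rw [setTwo_apply, if_neg (hik.trans hkj).ne, if_neg hik.ne, hi]
    · rw [setTwo_apply, if_neg hkj.ne, if_pos rfl]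
    · intro p hp
      rw [setTwo_apply, if_neg (hp.trans hkj).ne, if_neg hp.ne]
      exact hfirst p (hp.trans hkj)
    · intro p hip hpk
      rw [setTwo_apply, if_neg (hpk.trans hkj).ne, if_neg hpk.ne]
      exact hH p hip (hpk.trans hkj)
    · rw [hz]
      ext p
      simp only [setTwo_apply]
      split_ifs <;> simp_all

theorem reflTransGen_allH (hm : 1 ≤ m) (x : Motzkin2 m) :
    ReflTransGen (transitionGraph (transP α β m)) x ⟨allH m, isMotzkin2_allH m⟩ := by
  suffices ∀ n (x : Fin m → MSym) (hx : IsMotzkin2 x), symCount x U + symCount x I = n →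
      ReflTransGen (transitionGraph (transP α β m)) ⟨x, hx⟩ ⟨allH m, isMotzkin2_allH m⟩ from
    this _ x.1 x.2 rfl
  intro n
  induction n using Nat.strong_induction_on with
  | _ n ih =>
  intro x hx hn
  by_cases hI : ∃ i, x i = I
  · obtain ⟨i, hi⟩ := hI
    have hU := natCast_symCount_update (R := ℤ) x i H U
    have hI := natCast_symCount_update (R := ℤ) x i H I
    simp [hi] at hU hI
    refine ReflTransGen.head ?_ (ih _ ?_ _ (hx.update_H hi) rfl)
    · refine transitionGraph_transP α β hm (stepWeight_pos α β hm (Or.inr (Or.inl ⟨i, ?_⟩)))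
      rw [recolorWeight, if_pos ⟨hi, rfl⟩]
      positivity
    · omega
  push Not at hI
  by_cases hD : ∃ j, x j = D
  · obtain ⟨j₀, hj₀⟩ := hD
    obtain ⟨i, j, hij, hiU, hjD, hfirst, hH⟩ := hx.exists_U_H_D hI hj₀
    have hU := natCast_symCount_setTwo (R := ℤ) x hij.ne H H U
    have hI := natCast_symCount_setTwo (R := ℤ) x hij.ne H H I
    simp [hiU, hjD] at hU hI
    have := Fin.lt_def.1 hij
    exact (reflTransGen_setTwo_H_H α β hm (j - i - 1) hx (by omega) hiU hjD hfirst hH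
      ⟨_, hx.setTwo_H_H hiU hjD hij hfirst⟩ rfl).trans (ih _ (by omega) _ _ rfl)
  · push Not at hD
    obtain rfl := hx.eq_allH hI hD
    rfl

theorem transP_irreducible (hm : 1 ≤ m) (x y : Motzkin2 m) :
    ReflTransGen (transitionGraph (transP α β m)) x y :=
  (detailedBalance_gibbs_transP α β).reflTransGen_of_forall (gibbs_pos α β) _
    (reflTransGen_allH α β hm) x y

end Irreducible

/-- For every `m ≥ 1` and all real `α, β`, the Markov chain
`M` on `𝔐²_m` is irreducible and aperiodic (the latter phrased via common
divisors: `gcd{t : P^t(x,x) > 0} = 1`), it is reversible with respect to the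
Gibbs distribution `π(x) = e^{-E(x)}/Z`, and `π` is its unique stationary
distribution. -/
theorem motzkin_chain_ergodic_reversible (α β : ℝ) (m : ℕ) (hm : 1 ≤ m) :
    (∀ x y : Motzkin2 m, ∃ t : ℕ, 0 < (transP α β m ^ t) x y) ∧
    (∀ x : Motzkin2 m, ∀ d : ℕ,
      (∀ t : ℕ, 0 < (transP α β m ^ t) x x → d ∣ t) → d ∣ 1) ∧
    (∀ x y : Motzkin2 m,
      gibbs α β m x * transP α β m x y = gibbs α β m y * transP α β m y x) ∧
    (∀ y : Motzkin2 m,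
      ∑ x : Motzkin2 m, gibbs α β m x * transP α β m x y = gibbs α β m y) ∧
    (∀ μ : Motzkin2 m → ℝ, (∀ x, 0 ≤ μ x) → (∑ x : Motzkin2 m, μ x = 1) →
      (∀ y : Motzkin2 m, ∑ x : Motzkin2 m, μ x * transP α β m x y = μ y) →
      μ = gibbs α β m) := by
  have hP := transP_mem_rowStochastic α β hm
  have hrev := detailedBalance_gibbs_transP α β (m := m)
  have hirr := transP_irreducible α β hm
  refine ⟨fun x y => exists_pow_pos_of_reflTransGen hP (hirr x y), fun x d hd => hd 1 ?_, hrev,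
    fun y => congrFun (hrev.vecMul_eq hP) y, fun μ _ hμ1 hμ =>
      hrev.eq_of_vecMul_eq hP hirr (gibbs_pos α β) (sum_gibbs α β) hμ1 (funext hμ)⟩
  rw [pow_one]
  linarith [half_le_transP_self α β hm x]
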